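/- Assume (A0): aᵢⱼ > 0 for all i,j ∈ {1,2} and b₁, b₂ > 0. Fix 0 < λ₁ < λ₂ and τ ≥ 1. Then there exists α₀ ∈ (0,1) such that for every α ∈ [0, α₀] and every λ ∈ [λ₁, λ₂], the only pair x₁, x₂ : ℝ → ℝ of continuously differentiable 2π-periodic functions with zero mean over [0,2π], xᵢ(t) > −bᵢ for all t, satisfying x₁'(t) = −αλ(a₁₁x₁(t−τ/λ) + a₁₂x₂(t−τ/λ))(b₁ + x₁(t)) and x₂'(t) = −αλ(a₂₁x₁(t−τ/λ) + a₂₂x₂(t−τ/λ))(b₂ + x₂(t)) for all t, is the trivial pair x₁ ≡ x₂ ≡ 0. -/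

import Mathlib

/-!
With `yᵢ = bᵢ + xᵢ > 0`, each equation reads `(log yᵢ)' = -αλ gᵢ`, where `gᵢ` is the delayed
linear combination of `x₁, x₂`; it is 2π-periodic with zero mean. Since `xᵢ` has a zero `t₀`,
`log (yᵢ t / bᵢ) = -αλ ∫_{t₀}^t gᵢ`, and over one period this integral is bounded both by
`2π ‖gᵢ‖∞` and, because `gᵢ ≥ -(aᵢ₁b₁ + aᵢ₂b₂)` and `gᵢ` has zero mean, by
`2π (aᵢ₁b₁ + aᵢ₂b₂)`. The second bound keeps the exponent in `[-1, 1]` for small `α`, where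
`|eʷ - 1| ≤ 2|w|`, and the first then gives `‖xᵢ‖∞ ≤ 4παλ bᵢ (aᵢ₁ + aᵢ₂) max ‖xⱼ‖∞`.
For `α` small the factor is at most `1/2`, which forces `max ‖xⱼ‖∞ = 0`.
-/

open Real Function intervalIntegral

theorem exists_eq_zero_of_intervalIntegral_eq_zero {f : ℝ → ℝ} {a b : ℝ} (hab : a ≠ b)
    (hf : Continuous f) (h : ∫ t in a..b, f t = 0) : ∃ c, f c = 0 := by
  obtain ⟨c, -, hc⟩ := exists_eq_interval_average hab hf.continuousOn
  exact ⟨c, by rw [hc, interval_average_eq, h, smul_zero]⟩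

theorem Function.Periodic.exists_forall_le {α : Type*} [TopologicalSpace α] [LinearOrder α]
    [ClosedIciTopology α] {f : ℝ → α} {T : ℝ} (hf : Periodic f T) (hT : T ≠ 0)
    (hc : Continuous f) : ∃ t₀, ∀ t, f t ≤ f t₀ := by
  obtain ⟨_, ⟨t₀, rfl⟩, hmax⟩ :=
    (hf.compact_of_continuous hT hc).exists_isGreatest (Set.range_nonempty f)
  exact ⟨t₀, fun t => hmax ⟨t, rfl⟩⟩

theorem Function.Periodic.intervalIntegral_comp_sub_eq {E : Type*} [NormedAddCommGroup E]
    [NormedSpace ℝ E] {f : ℝ → E} {T : ℝ} (hf : Periodic f T) (d : ℝ) :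
    ∫ t in 0..T, f (t - d) = ∫ t in 0..T, f t := by
  rw [integral_comp_sub_right, zero_sub, ← neg_add_eq_sub]
  simpa using hf.intervalIntegral_add_eq (-d) 0

theorem abs_intervalIntegral_le_of_neg_le_of_integral_eq_zero {g : ℝ → ℝ} {a b s B : ℝ}
    (hg : Continuous g) (hs : s ∈ Set.Icc a b) (hgB : ∀ t ∈ Set.Icc a b, -B ≤ g t)
    (h : ∫ t in a..b, g t = 0) : |∫ t in a..s, g t| ≤ (b - a) * B := by
  obtain ⟨has, hsb⟩ := hs
  have hlo : (s - a) * -B ≤ ∫ t in a..s, g t := by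
    simpa only [integral_const, smul_eq_mul] using
      integral_mono_on (μ := MeasureTheory.volume) has intervalIntegrable_const
        (hg.intervalIntegrable a s) fun t ht => hgB t ⟨ht.1, ht.2.trans hsb⟩
  have hhi : (b - s) * -B ≤ ∫ t in s..b, g t := by
    simpa only [integral_const, smul_eq_mul] using
      integral_mono_on (μ := MeasureTheory.volume) hsb intervalIntegrable_const
        (hg.intervalIntegrable s b) fun t ht => hgB t ⟨has.trans ht.1, ht.2⟩
  have hsum : (∫ t in a..s, g t) + ∫ t in s..b, g t = 0 := by
    rw [integral_add_adjacent_intervals (hg.intervalIntegrable a s)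
      (hg.intervalIntegrable s b), h]
  rcases (has.trans hsb).eq_or_lt with rfl | hab
  · obtain rfl : s = a := le_antisymm hsb has
    simp
  have hB : 0 ≤ B := by nlinarith
  rw [abs_le]
  constructor <;> nlinarith [mul_nonneg (sub_nonneg.2 has) hB, mul_nonneg (sub_nonneg.2 hsb) hB]

theorem eq_mul_exp_integral_of_deriv_eq_mul {y h : ℝ → ℝ} (hy : Differentiable ℝ y)
    (hh : Continuous h) (hpos : ∀ t, 0 < y t) (hode : ∀ t, deriv y t = h t * y t) (s t : ℝ) :
    y t = y s * exp (∫ σ in s..t, h σ) := by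
  have hlog : ∀ σ, HasDerivAt (fun σ => log (y σ)) (h σ) σ := fun σ => by
    simpa [hode σ, (hpos σ).ne'] using (hy σ).hasDerivAt.log (hpos σ).ne'
  rw [integral_eq_sub_of_hasDerivAt (fun σ _ => hlog σ) (hh.intervalIntegrable s t),
    exp_sub, exp_log (hpos t), exp_log (hpos s), mul_div_cancel₀ _ (hpos s).ne']

theorem abs_le_of_deriv_eq_neg_mul_mul_add {x g : ℝ → ℝ} {T b β B G : ℝ} (hT : 0 < T)
    (hb : 0 < b) (hβ : 0 ≤ β) (hx : Differentiable ℝ x) (hg : Continuous g)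
    (hxp : Periodic x T) (hgp : Periodic g T)
    (hxm : ∫ t in 0..T, x t = 0) (hgm : ∫ t in 0..T, g t = 0)
    (hxb : ∀ t, -b < x t) (hgB : ∀ t, -B ≤ g t) (hgG : ∀ t, |g t| ≤ G)
    (hode : ∀ t, deriv x t = -β * g t * (b + x t)) (hsmall : β * (T * B) ≤ 1) (t : ℝ) :
    |x t| ≤ 2 * β * T * b * G := by
  obtain ⟨t₀, ht₀⟩ := exists_eq_zero_of_intervalIntegral_eq_zero hT.ne hx.continuous hxm
  obtain ⟨s, hs, hxs⟩ := hxp.exists_mem_Ico hT t t₀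
  set I := ∫ σ in t₀..s, g σ
  have hgm' : ∫ σ in t₀..t₀ + T, g σ = 0 := by
    rw [hgp.intervalIntegral_add_eq t₀ 0, zero_add, hgm]
  have hIB : |I| ≤ T * B := by
    simpa using abs_intervalIntegral_le_of_neg_le_of_integral_eq_zero hg
      (Set.Ico_subset_Icc_self hs) (fun σ _ => hgB σ) hgm'
  have hIG : |I| ≤ T * G := by
    have hlen : |s - t₀| ≤ T := by rw [abs_le]; constructor <;> linarith [hs.1, hs.2]
    have hG : 0 ≤ G := (abs_nonneg _).trans (hgG 0)
    calc |I| ≤ G * |s - t₀| := by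
          simpa only [Real.norm_eq_abs] using
            norm_integral_le_of_norm_le_const (a := t₀) (b := s) (f := g) (C := G)
              fun σ _ => (Real.norm_eq_abs _).trans_le (hgG σ)
      _ ≤ T * G := by nlinarith
  have hrep : b + x s = b * exp (-β * I) := by
    have := eq_mul_exp_integral_of_deriv_eq_mul (y := fun t => b + x t) (h := fun t => -β * g t)
      (by fun_prop) (by fun_prop) (fun t => by linarith [hxb t])
      (fun t => by rw [deriv_const_add, hode t]) t₀ s
    rwa [ht₀, add_zero, integral_const_mul] at this
  have hw : |-β * I| ≤ 1 := by
    rw [abs_mul, abs_neg, abs_of_nonneg hβ]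
    exact (mul_le_mul_of_nonneg_left hIB hβ).trans hsmall
  have hxs' : x s = b * (exp (-β * I) - 1) := by rw [mul_sub, ← hrep]; ring
  calc |x t| = b * |exp (-β * I) - 1| := by rw [hxs, hxs', abs_mul, abs_of_pos hb]
    _ ≤ b * (2 * (β * (T * G))) := by
        gcongr
        refine (abs_exp_sub_one_le hw).trans ?_
        rw [abs_mul, abs_neg, abs_of_nonneg hβ]
        gcongr
    _ = 2 * β * T * b * G := by ring

theorem abs_le_half_of_deriv_eq_delayed_lotka_volterra {x₁ x₂ z : ℝ → ℝ} {T d β c₁ c₂ b₁ b₂ b S : ℝ}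
    (hT : 0 < T) (hβ : 0 ≤ β) (hc₁ : 0 ≤ c₁) (hc₂ : 0 ≤ c₂) (hb₁ : 0 ≤ b₁) (hb₂ : 0 ≤ b₂)
    (hb : 0 < b) (hx₁ : Continuous x₁) (hx₂ : Continuous x₂) (hz : Differentiable ℝ z)
    (hx₁p : Periodic x₁ T) (hx₂p : Periodic x₂ T) (hzp : Periodic z T)
    (hx₁m : ∫ t in 0..T, x₁ t = 0) (hx₂m : ∫ t in 0..T, x₂ t = 0)
    (hzm : ∫ t in 0..T, z t = 0)
    (hx₁b : ∀ t, -b₁ < x₁ t) (hx₂b : ∀ t, -b₂ < x₂ t) (hzb : ∀ t, -b < z t)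
    (hS₁ : ∀ t, |x₁ t| ≤ S) (hS₂ : ∀ t, |x₂ t| ≤ S)
    (hode : ∀ t, deriv z t = -β * (c₁ * x₁ (t - d) + c₂ * x₂ (t - d)) * (b + z t))
    (hsmall : β * (4 * T * (b + b₁ + b₂) * (c₁ + c₂)) ≤ 1) (t : ℝ) : |z t| ≤ S / 2 := by
  have hgp : Periodic (fun t => c₁ * x₁ (t - d) + c₂ * x₂ (t - d)) T := fun t => by
    simp only [add_sub_right_comm t T d, hx₁p _, hx₂p _]
  have hgm : ∫ t in 0..T, (c₁ * x₁ (t - d) + c₂ * x₂ (t - d)) = 0 := by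
    rw [integral_add (Continuous.intervalIntegrable (by fun_prop) _ _)
        (Continuous.intervalIntegrable (by fun_prop) _ _), integral_const_mul, integral_const_mul,
      hx₁p.intervalIntegral_comp_sub_eq, hx₂p.intervalIntegral_comp_sub_eq, hx₁m, hx₂m]
    ring
  have hgB : ∀ t, -(c₁ * b₁ + c₂ * b₂) ≤ c₁ * x₁ (t - d) + c₂ * x₂ (t - d) := fun t => by
    nlinarith [mul_le_mul_of_nonneg_left (hx₁b (t - d)).le hc₁,
      mul_le_mul_of_nonneg_left (hx₂b (t - d)).le hc₂]
  have hgG : ∀ t, |c₁ * x₁ (t - d) + c₂ * x₂ (t - d)| ≤ (c₁ + c₂) * S := fun t => by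
    calc |c₁ * x₁ (t - d) + c₂ * x₂ (t - d)| ≤ c₁ * |x₁ (t - d)| + c₂ * |x₂ (t - d)| := by
          refine (abs_add_le _ _).trans_eq ?_
          rw [abs_mul, abs_mul, abs_of_nonneg hc₁, abs_of_nonneg hc₂]
      _ ≤ (c₁ + c₂) * S := by nlinarith [hS₁ (t - d), hS₂ (t - d)]
  have hS : 0 ≤ S := (abs_nonneg _).trans (hS₁ 0)
  have hTc₁ := mul_nonneg hT.le hc₁
  have hTc₂ := mul_nonneg hT.le hc₂
  have hβTB : β * (T * (c₁ * b₁ + c₂ * b₂)) ≤ 1 := by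
    refine (mul_le_mul_of_nonneg_left ?_ hβ).trans hsmall
    nlinarith [mul_nonneg hTc₁ hb.le, mul_nonneg hTc₁ hb₁, mul_nonneg hTc₁ hb₂,
      mul_nonneg hTc₂ hb.le, mul_nonneg hTc₂ hb₁, mul_nonneg hTc₂ hb₂]
  have hβTb : β * (4 * T * b * (c₁ + c₂)) ≤ 1 := by
    refine (mul_le_mul_of_nonneg_left ?_ hβ).trans hsmall
    nlinarith [mul_nonneg hTc₁ hb₁, mul_nonneg hTc₁ hb₂, mul_nonneg hTc₂ hb₁, mul_nonneg hTc₂ hb₂]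
  calc |z t| ≤ 2 * β * T * b * ((c₁ + c₂) * S) :=
        abs_le_of_deriv_eq_neg_mul_mul_add hT hb hβ hz (by fun_prop) hzp hgp hzm hgm hzb hgB
          hgG hode hβTB t
    _ = β * (4 * T * b * (c₁ + c₂)) * S / 2 := by ring
    _ ≤ S / 2 := by gcongr; exact mul_le_of_le_one_left hS hβTb

theorem lotka_volterra_small_alpha_trivial_general
    (a11 a12 a21 a22 b1 b2 lam1 lam2 τ : ℝ)
    (hA0 : 0 < a11 ∧ 0 < a12 ∧ 0 < a21 ∧ 0 < a22)
    (hb1 : 0 < b1) (hb2 : 0 < b2)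
    (hlam1 : 0 < lam1) (hlam12 : lam1 < lam2) :
    ∃ α0 : ℝ, α0 ∈ Set.Ioo (0:ℝ) 1 ∧
      ∀ α : ℝ, α ∈ Set.Icc 0 α0 →
      ∀ lam : ℝ, lam ∈ Set.Icc lam1 lam2 →
      ∀ x1 x2 : ℝ → ℝ,
        ContDiff ℝ 1 x1 → ContDiff ℝ 1 x2 →
        Function.Periodic x1 (2 * π) → Function.Periodic x2 (2 * π) →
        (∫ t in (0:ℝ)..(2 * π), x1 t) = 0 →
        (∫ t in (0:ℝ)..(2 * π), x2 t) = 0 →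
        (∀ t : ℝ, -b1 < x1 t) → (∀ t : ℝ, -b2 < x2 t) →
        (∀ t : ℝ, deriv x1 t =
          -(α * lam) * (a11 * x1 (t - τ / lam) + a12 * x2 (t - τ / lam))
            * (b1 + x1 t)) →
        (∀ t : ℝ, deriv x2 t =
          -(α * lam) * (a21 * x1 (t - τ / lam) + a22 * x2 (t - τ / lam))
            * (b2 + x2 t)) →
        ∀ t : ℝ, x1 t = 0 ∧ x2 t = 0 := by
  obtain ⟨ha11, ha12, ha21, ha22⟩ := hA0
  have hlam2 : 0 < lam2 := hlam1.trans hlam12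
  set K := 4 * (2 * π) * (b1 + b1 + b2 + b2) * (a11 + a12 + a21 + a22) with hK_def
  have hK : 0 < K := by positivity
  refine ⟨1 / (lam2 * K + 2), ⟨by positivity, ?_⟩, ?_⟩
  · rw [div_lt_one (by positivity)]
    nlinarith [mul_pos hlam2 hK]
  intro α hα lam hlam x1 x2 hx1 hx2 hx1p hx2p hx1m hx2m hx1b hx2b hode1 hode2
  have hβ : 0 ≤ α * lam := mul_nonneg hα.1 (hlam1.trans_le hlam.1).le
  have hsmall : ∀ c ≤ K, α * lam * c ≤ 1 := fun c hc => by
    have hα' : α * (lam2 * K + 2) ≤ 1 := (le_div_iff₀ (by positivity)).mp hα.2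
    nlinarith [hα.1, mul_le_mul_of_nonneg_left hc hβ,
      mul_le_mul_of_nonneg_right (mul_le_mul_of_nonneg_left hlam.2 hα.1) hK.le]
  obtain ⟨t₀, ht₀⟩ := Periodic.exists_forall_le (f := fun t => max |x1 t| |x2 t|) (T := 2 * π)
    (fun t => by simp only [hx1p t, hx2p t]) (by positivity) (by fun_prop)
  set S := max |x1 t₀| |x2 t₀|
  have hS1 : ∀ t, |x1 t| ≤ S := fun t => (le_max_left _ _).trans (ht₀ t)
  have hS2 : ∀ t, |x2 t| ≤ S := fun t => (le_max_right _ _).trans (ht₀ t)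
  have h1 := abs_le_half_of_deriv_eq_delayed_lotka_volterra (by positivity) hβ ha11.le ha12.le
    hb1.le hb2.le hb1 hx1.continuous hx2.continuous (hx1.differentiable one_ne_zero)
    hx1p hx2p hx1p hx1m hx2m hx1m hx1b hx2b hx1b hS1 hS2 hode1
    (hsmall _ (by rw [hK_def]; gcongr 4 * (2 * π) * ?_ * ?_ <;> linarith)) t₀
  have h2 := abs_le_half_of_deriv_eq_delayed_lotka_volterra (by positivity) hβ ha21.le ha22.le
    hb1.le hb2.le hb2 hx1.continuous hx2.continuous (hx2.differentiable one_ne_zero)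
    hx1p hx2p hx2p hx1m hx2m hx2m hx1b hx2b hx2b hS1 hS2 hode2
    (hsmall _ (by rw [hK_def]; gcongr 4 * (2 * π) * ?_ * ?_ <;> linarith)) t₀
  have hS0 : S ≤ 0 := by linarith [max_le h1 h2]
  exact fun t => ⟨abs_nonpos_iff.mp ((hS1 t).trans hS0), abs_nonpos_iff.mp ((hS2 t).trans hS0)⟩

/-- For α small enough, the parametrized system (PA) has only the trivial
periodic solution. -/
theorem lotka_volterra_small_alpha_trivial
    (a11 a12 a21 a22 b1 b2 lam1 lam2 τ : ℝ)
    (hA0 : 0 < a11 ∧ 0 < a12 ∧ 0 < a21 ∧ 0 < a22)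
    (hb1 : 0 < b1) (hb2 : 0 < b2)
    (hlam1 : 0 < lam1) (hlam12 : lam1 < lam2) (hτ : 1 ≤ τ) :
    ∃ α0 : ℝ, α0 ∈ Set.Ioo (0:ℝ) 1 ∧
      ∀ α : ℝ, α ∈ Set.Icc 0 α0 →
      ∀ lam : ℝ, lam ∈ Set.Icc lam1 lam2 →
      ∀ x1 x2 : ℝ → ℝ,
        ContDiff ℝ 1 x1 → ContDiff ℝ 1 x2 →
        Function.Periodic x1 (2 * π) → Function.Periodic x2 (2 * π) →
        (∫ t in (0:ℝ)..(2 * π), x1 t) = 0 →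
        (∫ t in (0:ℝ)..(2 * π), x2 t) = 0 →
        (∀ t : ℝ, -b1 < x1 t) → (∀ t : ℝ, -b2 < x2 t) →
        (∀ t : ℝ, deriv x1 t =
          -(α * lam) * (a11 * x1 (t - τ / lam) + a12 * x2 (t - τ / lam))
            * (b1 + x1 t)) →
        (∀ t : ℝ, deriv x2 t =
          -(α * lam) * (a21 * x1 (t - τ / lam) + a22 * x2 (t - τ / lam))
            * (b2 + x2 t)) →
        ∀ t : ℝ, x1 t = 0 ∧ x2 t = 0 :=
  lotka_volterra_small_alpha_trivial_general a11 a12 a21 a22 b1 b2 lam1 lam2 τ hA0 hb1 hb2 hlam1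
    hlam12
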